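/- Let k be a field of characteristic ≠ 2, (C, Δ, ε) a coassociative counital k-coalgebra, and σ : C → C a coalgebra automorphism with σ ∘ σ = id; set p± := (1/2)(id ± σ). Then the k-module C × C equipped with the comultiplication Δ^σ determined by Δ^σ(c, 0) = Σ (c^{(1)}, 0) ⊗ (p₊(c^{(2)}), 0) + (0, c^{(1)}) ⊗ (p₋(c^{(2)}), 0) and Δ^σ(0, c) = Σ (0, c^{(1)}) ⊗ (0, p₊(c^{(2)})) + (c^{(1)}, 0) ⊗ (0, p₋(c^{(2)})), and the counit ε^σ(a, b) := ε(a) + ε(b), is a coassociative counital k-coalgebra. (This is the smash coproduct C^σ = C # k[ℤ/2]: identifying (a,b) with a#1 + b#σ, on σ-homogeneous components the comultiplication reads Δ(c # σ^k) = c^{(1)} # σ^{|c^{(2)}|+k} ⊗ c^{(2)} # σ^k.) -/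

import Mathlib

/-!
Put `p₀ = p₊`, `p₁ = p₋` and `ι₀ = inl`, `ι₁ = inr`. Since `σ` is an involutive coalgebra
automorphism, the `p_a` (`a ∈ ℤ/2`) are orthogonal idempotents with sum `id`,
`Δ ∘ p_a = Σ_b (p_{a-b} ⊗ p_b) ∘ Δ` and `ε ∘ p_a = δ_{a,0} ε`: a `ℤ/2`-grading of the coalgebra
`C`. In these terms `Δ^σ ∘ ι_t = Σ_s (ι_{s+t} ⊗ ι_t) ∘ (id ⊗ p_s) ∘ Δ`, and such a smash coproduct
is a coalgebra for a grading by any finite abelian group. Indeed, coassociativity of `C` and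
`(id ⊗ p_b) Δ p_{a+b} = (p_a ⊗ p_b) Δ` turn both `(Δ^σ ⊗ id) Δ^σ (ι_t c)` and
`(id ⊗ Δ^σ) Δ^σ (ι_t c)` into `Σ_{u,s} ι_{u+t} c₁ ⊗ ι_{s+t} p_{u-s} c₂ ⊗ ι_t p_s c₃`, the first
after reindexing its double sum over `(r, s)` by `u = r + s`. The counit laws come from
`Σ_s p_s = id` and `ε p_s = δ_{s,0} ε`.
-/

open TensorProduct

noncomputable section

namespace SmashCoproduct

variable {k C : Type*} [Field k] [AddCommGroup C] [Module k C] [Coalgebra k C]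

/-- The projection `p₊ = (1/2)(id + σ)` onto the even part. -/
def pPlus (σ : C →ₗ[k] C) : C →ₗ[k] C := (2 : k)⁻¹ • (LinearMap.id + σ)

/-- The projection `p₋ = (1/2)(id − σ)` onto the odd part. -/
def pMinus (σ : C →ₗ[k] C) : C →ₗ[k] C := (2 : k)⁻¹ • (LinearMap.id - σ)

/-- The smash coproduct `Δ^σ` on `C × C` (identifying `(a,b)` with `a#1 + b#σ`):
`Δ^σ(c,0) = Σ (c¹,0) ⊗ (p₊ c²,0) + (0,c¹) ⊗ (p₋ c²,0)` and
`Δ^σ(0,c) = Σ (0,c¹) ⊗ (0,p₊ c²) + (c¹,0) ⊗ (0,p₋ c²)`. -/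
def smashComul (σ : C →ₗ[k] C) : (C × C) →ₗ[k] (C × C) ⊗[k] (C × C) :=
  ((TensorProduct.map (LinearMap.inl k C C) (LinearMap.inl k C C)
        ∘ₗ LinearMap.lTensor C (pPlus σ) ∘ₗ Coalgebra.comul
      + TensorProduct.map (LinearMap.inr k C C) (LinearMap.inl k C C)
        ∘ₗ LinearMap.lTensor C (pMinus σ) ∘ₗ Coalgebra.comul)
    ∘ₗ LinearMap.fst k C C)
  + ((TensorProduct.map (LinearMap.inr k C C) (LinearMap.inr k C C)
        ∘ₗ LinearMap.lTensor C (pPlus σ) ∘ₗ Coalgebra.comul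
      + TensorProduct.map (LinearMap.inl k C C) (LinearMap.inr k C C)
        ∘ₗ LinearMap.lTensor C (pMinus σ) ∘ₗ Coalgebra.comul)
    ∘ₗ LinearMap.snd k C C)

/-- The counit `ε^σ(a,b) = ε(a) + ε(b)` of the smash coproduct. -/
def smashCounit : (C × C) →ₗ[k] k :=
  Coalgebra.counit ∘ₗ LinearMap.fst k C C + Coalgebra.counit ∘ₗ LinearMap.snd k C C

section ComulRight

variable {R A : Type*} [CommSemiring R] [AddCommMonoid A] [Module R A] [Coalgebra R A]

open Coalgebra LinearMap

def comulRight (P : A →ₗ[R] A) : A →ₗ[R] A ⊗[R] A := lTensor A P ∘ₗ comul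

theorem assoc_comp_rTensor_comulRight {P Q S : A →ₗ[R] A}
    (h : comulRight Q ∘ₗ S = map P Q ∘ₗ comul) :
    (TensorProduct.assoc R A A A).toLinearMap ∘ₗ rTensor A (comulRight P) ∘ₗ comulRight Q
      = lTensor A (comulRight Q) ∘ₗ comulRight S := by
  have hswap : rTensor A (comulRight P) ∘ₗ comulRight Q
      = map (lTensor A P) Q ∘ₗ rTensor A comul ∘ₗ comul := by
    simp only [comulRight, rTensor_comp, ← comp_assoc]
    rw [comp_assoc _ (rTensor A comul), rTensor_comp_lTensor, ← lTensor_comp_rTensor,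
      ← comp_assoc, rTensor_comp_lTensor]
  calc _ = lTensor A (map P Q) ∘ₗ (TensorProduct.assoc R A A A).toLinearMap ∘ₗ
          rTensor A comul ∘ₗ comul := by
        rw [hswap, ← comp_assoc]
        exact congrArg (· ∘ₗ _) (map_map_comp_assoc_eq LinearMap.id P Q).symm
    _ = lTensor A (map P Q) ∘ₗ lTensor A comul ∘ₗ comul := by rw [coassoc]
    _ = lTensor A (comulRight Q) ∘ₗ comulRight S := by
        rw [← comp_assoc, ← lTensor_comp, ← h, comulRight, comulRight, lTensor_comp, comp_assoc]

end ComulRight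

section FinsetSum

variable {R M N P Q ι : Type*} [CommSemiring R] [AddCommMonoid M] [Module R M]
  [AddCommMonoid N] [Module R N] [AddCommMonoid P] [Module R P] [AddCommMonoid Q] [Module R Q]
  (s : Finset ι)

theorem _root_.LinearMap.comp_finsetSum (f : N →ₗ[R] P) (g : ι → M →ₗ[R] N) :
    f ∘ₗ ∑ i ∈ s, g i = ∑ i ∈ s, f ∘ₗ g i :=
  map_sum (LinearMap.llcomp R M N P f) g s

theorem _root_.LinearMap.finsetSum_comp (f : ι → N →ₗ[R] P) (g : M →ₗ[R] N) :
    (∑ i ∈ s, f i) ∘ₗ g = ∑ i ∈ s, f i ∘ₗ g :=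
  map_sum (LinearMap.lcomp R P g) f s

theorem _root_.TensorProduct.map_finsetSum_left (f : ι → M →ₗ[R] P) (g : N →ₗ[R] Q) :
    map (∑ i ∈ s, f i) g = ∑ i ∈ s, map (f i) g :=
  map_sum ((mapBilinear (RingHom.id R) M N P Q).flip g) f s

theorem _root_.TensorProduct.map_finsetSum_right (f : M →ₗ[R] P) (g : ι → N →ₗ[R] Q) :
    map f (∑ i ∈ s, g i) = ∑ i ∈ s, map f (g i) :=
  map_sum (mapBilinear (RingHom.id R) M N P Q f) g s

end FinsetSum

section Graded

variable {R A D G : Type*} [CommSemiring R] [AddCommMonoid A] [Module R A] [Coalgebra R A]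
  [AddCommMonoid D] [Module R D] [AddCommGroup G] [Fintype G] [DecidableEq G]

open Coalgebra LinearMap

/-- `p a` is the projection onto the component `A_a` of a grading of the coalgebra `A` with
`Δ A_a ⊆ ⊕_b A_{a-b} ⊗ A_b` and `ε A_a = 0` for `a ≠ 0`. -/
structure IsCoalgebraGrading (p : G → A →ₗ[R] A) : Prop where
  comp_eq_ite : ∀ a b, p a ∘ₗ p b = if a = b then p a else 0
  sum_eq_id : ∑ a, p a = LinearMap.id
  comul_comp : ∀ a, comul ∘ₗ p a = ∑ b, map (p (a - b)) (p b) ∘ₗ comul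
  counit_comp : ∀ a, counit ∘ₗ p a = if a = 0 then counit else 0

/-- The smash coproduct `Δ(c # t) = c₁ # (|c₂| + t) ⊗ c₂ # t`, writing `ι t c` for `c # t`. -/
def IsSmashComul (p : G → A →ₗ[R] A) (ι : G → A →ₗ[R] D) (δ : D →ₗ[R] D ⊗[R] D) : Prop :=
  ∀ t, δ ∘ₗ ι t = ∑ s, map (ι (s + t)) (ι t) ∘ₗ comulRight (p s)

namespace IsCoalgebraGrading

variable {p : G → A →ₗ[R] A} {ι : G → A →ₗ[R] D} {δ : D →ₗ[R] D ⊗[R] D} {ε : D →ₗ[R] R}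

theorem comulRight_comp (hp : IsCoalgebraGrading p) (a b : G) :
    comulRight (p b) ∘ₗ p a = map (p (a - b)) (p b) ∘ₗ comul := by
  have hsum : comulRight (p b) ∘ₗ p a = ∑ u, map (p (a - u)) (p b ∘ₗ p u) ∘ₗ comul := by
    rw [comulRight, comp_assoc, hp.comul_comp, comp_finsetSum]
    simp only [← comp_assoc, lTensor_comp_map]
  rw [hsum, Fintype.sum_eq_single b fun u hu => ?_, hp.comp_eq_ite, if_pos rfl]
  rw [hp.comp_eq_ite, if_neg hu.symm, map_zero_right, zero_comp]

theorem assoc_comp_rTensor_comulRight (hp : IsCoalgebraGrading p) (a b : G) :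
    (TensorProduct.assoc R A A A).toLinearMap ∘ₗ rTensor A (comulRight (p a)) ∘ₗ
        comulRight (p b)
      = lTensor A (comulRight (p b)) ∘ₗ comulRight (p (a + b)) :=
  SmashCoproduct.assoc_comp_rTensor_comulRight <| by
    rw [hp.comulRight_comp, add_sub_cancel_right]

theorem assoc_comp_rTensor_comp (hp : IsCoalgebraGrading p) (hδ : IsSmashComul p ι δ) (t : G) :
    (TensorProduct.assoc R D D D).toLinearMap ∘ₗ rTensor D δ ∘ₗ δ ∘ₗ ι t
      = lTensor D δ ∘ₗ δ ∘ₗ ι t := by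
  let F : G → G → A →ₗ[R] D ⊗[R] (D ⊗[R] D) := fun u s =>
    map (ι (u + t)) (map (ι (s + t)) (ι t)) ∘ₗ lTensor A (comulRight (p s)) ∘ₗ comulRight (p u)
  have lhs : (TensorProduct.assoc R D D D).toLinearMap ∘ₗ rTensor D δ ∘ₗ δ ∘ₗ ι t
      = ∑ s, ∑ r, F (r + s) s := by
    rw [hδ t, comp_finsetSum, comp_finsetSum]
    refine Finset.sum_congr rfl fun s _ => ?_
    rw [← comp_assoc (h := rTensor D δ), rTensor_comp_map, hδ (s + t), map_finsetSum_left,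
      finsetSum_comp, comp_finsetSum]
    refine Finset.sum_congr rfl fun r _ => ?_
    rw [← map_comp_rTensor, comp_assoc, ← comp_assoc _ (map _ _), ← map_map_comp_assoc_eq,
      comp_assoc, hp.assoc_comp_rTensor_comulRight, ← add_assoc]
  have rhs : lTensor D δ ∘ₗ δ ∘ₗ ι t = ∑ u, ∑ s, F u s := by
    rw [hδ t, comp_finsetSum]
    refine Finset.sum_congr rfl fun u _ => ?_
    rw [← comp_assoc, lTensor_comp_map, hδ t, map_finsetSum_right, finsetSum_comp]
    refine Finset.sum_congr rfl fun s _ => ?_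
    rw [← map_comp_lTensor, comp_assoc]
  rw [lhs, rhs, Finset.sum_comm (f := F)]
  exact Finset.sum_congr rfl fun s _ => Equiv.sum_comp (Equiv.addRight s) (F · s)

theorem lid_comp_rTensor_comp (hp : IsCoalgebraGrading p) (hδ : IsSmashComul p ι δ)
    (hε : ∀ t, ε ∘ₗ ι t = counit) (t : G) :
    (TensorProduct.lid R D).toLinearMap ∘ₗ rTensor D ε ∘ₗ δ ∘ₗ ι t = ι t := by
  calc _ = (TensorProduct.lid R D).toLinearMap ∘ₗ
          ∑ s, map (counit : A →ₗ[R] R) (ι t ∘ₗ p s) ∘ₗ comul := by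
        simp only [hδ t, comp_finsetSum]
        refine Finset.sum_congr rfl fun s _ => ?_
        rw [← comp_assoc (h := rTensor D ε), rTensor_comp_map, hε, comulRight,
          ← comp_assoc (h := map _ _), map_comp_lTensor]
    _ = (TensorProduct.lid R D).toLinearMap ∘ₗ map (counit : A →ₗ[R] R) (ι t) ∘ₗ comul := by
        rw [← finsetSum_comp, ← map_finsetSum_right, ← comp_finsetSum, hp.sum_eq_id, comp_id]
    _ = ι t := by
        rw [CoassocSimps.map_counit_comp_comul_left]
        ext
        simp

theorem rid_comp_lTensor_comp (hp : IsCoalgebraGrading p) (hδ : IsSmashComul p ι δ)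
    (hε : ∀ t, ε ∘ₗ ι t = counit) (t : G) :
    (TensorProduct.rid R D).toLinearMap ∘ₗ lTensor D ε ∘ₗ δ ∘ₗ ι t = ι t := by
  calc _ = (TensorProduct.rid R D).toLinearMap ∘ₗ
          ∑ s, map (ι (s + t)) ((counit : A →ₗ[R] R) ∘ₗ p s) ∘ₗ comul := by
        simp only [hδ t, comp_finsetSum]
        refine Finset.sum_congr rfl fun s _ => ?_
        rw [← comp_assoc (h := lTensor D ε), lTensor_comp_map, hε, comulRight,
          ← comp_assoc (h := map _ _), map_comp_lTensor]
    _ = (TensorProduct.rid R D).toLinearMap ∘ₗ map (ι t) (counit : A →ₗ[R] R) ∘ₗ comul := by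
        rw [Fintype.sum_eq_single 0 fun s hs => ?_, hp.counit_comp, if_pos rfl, zero_add]
        rw [hp.counit_comp, if_neg hs, map_zero_right, zero_comp]
    _ = ι t := by
        rw [CoassocSimps.map_counit_comp_comul_right]
        ext
        simp

end IsCoalgebraGrading

end Graded

theorem _root_.ZMod.sum_univ_two {M : Type*} [AddCommMonoid M] (f : ZMod 2 → M) :
    ∑ s, f s = f 0 + f 1 :=
  Fin.sum_univ_two f

theorem _root_.ZMod.forall_two {P : ZMod 2 → Prop} : (∀ a, P a) ↔ P 0 ∧ P 1 :=
  Fin.forall_fin_two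

section Involution

variable {V : Type*} [AddCommGroup V] [Module k V] {σ : V →ₗ[k] V}

@[simp]
theorem pPlus_apply (v : V) : pPlus σ v = (2 : k)⁻¹ • (v + σ v) := rfl

@[simp]
theorem pMinus_apply (v : V) : pMinus σ v = (2 : k)⁻¹ • (v - σ v) := rfl

theorem pPlus_add_pMinus (hchar : (2 : k) ≠ 0) : pPlus σ + pMinus σ = LinearMap.id := by
  ext v
  simp only [LinearMap.add_apply, pPlus_apply, pMinus_apply, LinearMap.id_apply]
  match_scalars <;> field_simp <;> norm_num

theorem pPlus_comp_pPlus (hchar : (2 : k) ≠ 0) (hσσ : ∀ v, σ (σ v) = v) :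
    pPlus σ ∘ₗ pPlus σ = pPlus σ := by
  ext v
  simp only [LinearMap.comp_apply, pPlus_apply, map_smul, map_add, hσσ]
  match_scalars <;> field_simp <;> norm_num

theorem pMinus_comp_pMinus (hchar : (2 : k) ≠ 0) (hσσ : ∀ v, σ (σ v) = v) :
    pMinus σ ∘ₗ pMinus σ = pMinus σ := by
  ext v
  simp only [LinearMap.comp_apply, pMinus_apply, map_smul, map_sub, hσσ]
  match_scalars <;> field_simp <;> norm_num

theorem pPlus_comp_pMinus (hσσ : ∀ v, σ (σ v) = v) : pPlus σ ∘ₗ pMinus σ = 0 := by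
  ext v
  simp only [LinearMap.comp_apply, pPlus_apply, pMinus_apply, map_smul, map_sub, hσσ,
    LinearMap.zero_apply]
  module

theorem pMinus_comp_pPlus (hσσ : ∀ v, σ (σ v) = v) : pMinus σ ∘ₗ pPlus σ = 0 := by
  ext v
  simp only [LinearMap.comp_apply, pPlus_apply, pMinus_apply, map_smul, map_add, hσσ,
    LinearMap.zero_apply]
  module

theorem map_pPlus_pPlus_add_map_pMinus_pMinus (hchar : (2 : k) ≠ 0) :
    map (pPlus σ) (pPlus σ) + map (pMinus σ) (pMinus σ)
      = (2 : k)⁻¹ • (LinearMap.id + map σ σ) := by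
  refine TensorProduct.ext' fun v w => ?_
  simp only [LinearMap.add_apply, map_tmul, LinearMap.smul_apply, LinearMap.id_apply,
    pPlus_apply, pMinus_apply]
  simp only [smul_tmul', tmul_smul, smul_smul, add_tmul, sub_tmul, tmul_add, tmul_sub, smul_add,
    smul_sub]
  simp only [← smul_tmul']
  match_scalars <;> field_simp <;> norm_num

theorem map_pMinus_pPlus_add_map_pPlus_pMinus (hchar : (2 : k) ≠ 0) :
    map (pMinus σ) (pPlus σ) + map (pPlus σ) (pMinus σ)
      = (2 : k)⁻¹ • (LinearMap.id - map σ σ) := by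
  refine TensorProduct.ext' fun v w => ?_
  simp only [LinearMap.add_apply, LinearMap.sub_apply, map_tmul, LinearMap.smul_apply,
    LinearMap.id_apply, pPlus_apply, pMinus_apply]
  simp only [smul_tmul', tmul_smul, smul_smul, add_tmul, sub_tmul, tmul_add, tmul_sub, smul_add,
    smul_sub]
  simp only [← smul_tmul']
  match_scalars <;> field_simp <;> norm_num

def signProj (σ : V →ₗ[k] V) : ZMod 2 → V →ₗ[k] V := ![pPlus σ, pMinus σ]

@[simp]
theorem signProj_zero : signProj σ 0 = pPlus σ := rfl

@[simp]
theorem signProj_one : signProj σ 1 = pMinus σ := rfl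

variable (k V) in
def smashInj : ZMod 2 → V →ₗ[k] V × V := ![LinearMap.inl k V V, LinearMap.inr k V V]

@[simp]
theorem smashInj_zero : smashInj k V 0 = LinearMap.inl k V V := rfl

@[simp]
theorem smashInj_one : smashInj k V 1 = LinearMap.inr k V V := rfl

end Involution

section InvolutiveCoalgebraAut

open Coalgebra

variable {σ : C →ₗ[k] C}

theorem comul_comp_pPlus (hchar : (2 : k) ≠ 0)
    (hσcomul : ∀ c : C, comul (σ c) = map σ σ (comul c)) :
    comul ∘ₗ pPlus σ
      = map (pPlus σ) (pPlus σ) ∘ₗ comul + map (pMinus σ) (pMinus σ) ∘ₗ comul := by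
  rw [← LinearMap.add_comp, map_pPlus_pPlus_add_map_pMinus_pMinus hchar]
  ext c
  simp [hσcomul]

theorem comul_comp_pMinus (hchar : (2 : k) ≠ 0)
    (hσcomul : ∀ c : C, comul (σ c) = map σ σ (comul c)) :
    comul ∘ₗ pMinus σ
      = map (pMinus σ) (pPlus σ) ∘ₗ comul + map (pPlus σ) (pMinus σ) ∘ₗ comul := by
  rw [← LinearMap.add_comp, map_pMinus_pPlus_add_map_pPlus_pMinus hchar]
  ext c
  simp [hσcomul]

theorem counit_comp_pPlus (hchar : (2 : k) ≠ 0)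
    (hσcounit : ∀ c : C, (counit (σ c) : k) = counit c) :
    (counit : C →ₗ[k] k) ∘ₗ pPlus σ = counit := by
  ext c
  simp only [LinearMap.comp_apply, pPlus_apply, map_smul, map_add, hσcounit, smul_eq_mul]
  field_simp
  ring

theorem counit_comp_pMinus (hσcounit : ∀ c : C, (counit (σ c) : k) = counit c) :
    (counit : C →ₗ[k] k) ∘ₗ pMinus σ = 0 := by
  ext c
  simp only [LinearMap.comp_apply, pMinus_apply, map_smul, map_sub, hσcounit, sub_self,
    smul_zero, LinearMap.zero_apply]

theorem isCoalgebraGrading_signProj (hchar : (2 : k) ≠ 0) (hσσ : ∀ c, σ (σ c) = c)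
    (hσcomul : ∀ c : C, comul (σ c) = map σ σ (comul c))
    (hσcounit : ∀ c : C, (counit (σ c) : k) = counit c) :
    IsCoalgebraGrading (signProj σ) where
  comp_eq_ite := by
    simp [ZMod.forall_two, pPlus_comp_pPlus hchar hσσ, pPlus_comp_pMinus hσσ,
      pMinus_comp_pPlus hσσ, pMinus_comp_pMinus hchar hσσ]
  sum_eq_id := by simp [ZMod.sum_univ_two, pPlus_add_pMinus hchar]
  comul_comp := by
    simp [ZMod.forall_two, ZMod.sum_univ_two, comul_comp_pPlus hchar hσcomul,
      comul_comp_pMinus hchar hσcomul]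
  counit_comp := by
    simp [ZMod.forall_two, counit_comp_pPlus hchar hσcounit, counit_comp_pMinus hσcounit]

theorem isSmashComul_smashComul (σ : C →ₗ[k] C) :
    IsSmashComul (signProj σ) (smashInj k C) (smashComul σ) := by
  have one_add_one : (1 : ZMod 2) + 1 = 0 := rfl
  simp only [IsSmashComul, ZMod.forall_two, ZMod.sum_univ_two, zero_add, add_zero, one_add_one]
  constructor <;> ext c <;> simp [smashComul, comulRight]

theorem smashCounit_comp_smashInj (t : ZMod 2) :
    smashCounit ∘ₗ smashInj k C t = counit := by
  revert t
  simp only [ZMod.forall_two]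
  constructor <;> ext c <;> simp [smashCounit]

end InvolutiveCoalgebraAut

/-- if `σ` is an involutive coalgebra automorphism of `C`
(char `k ≠ 2`), then `C × C` with the smash coproduct `Δ^σ` and the counit
`ε^σ` is a coassociative counital `k`-coalgebra
(the smash coproduct `C^σ = C # k[ℤ/2]`). -/
theorem smashCoproduct_is_coalgebra (hchar : (2 : k) ≠ 0)
    (σ : C →ₗ[k] C) (hσσ : ∀ c, σ (σ c) = c)
    (hσcomul : ∀ c : C, Coalgebra.comul (σ c) = TensorProduct.map σ σ (Coalgebra.comul c))
    (hσcounit : ∀ c : C, (Coalgebra.counit (σ c) : k) = Coalgebra.counit c) :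
    (∀ x : C × C,
        (TensorProduct.assoc k (C × C) (C × C) (C × C))
          (((smashComul σ).rTensor (C × C)) (smashComul σ x))
          = ((smashComul σ).lTensor (C × C)) (smashComul σ x))
    ∧ (∀ x : C × C,
        (TensorProduct.lid k (C × C))
          (((smashCounit (k := k) (C := C)).rTensor (C × C)) (smashComul σ x)) = x)
    ∧ (∀ x : C × C,
        (TensorProduct.rid k (C × C))
          (((smashCounit (k := k) (C := C)).lTensor (C × C)) (smashComul σ x)) = x) := by
  have hp := isCoalgebraGrading_signProj hchar hσσ hσcomul hσcounit
  have hδ := isSmashComul_smashComul σ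
  have hε := smashCounit_comp_smashInj (k := k) (C := C)
  have coassoc : (TensorProduct.assoc k (C × C) (C × C) (C × C)).toLinearMap
        ∘ₗ (smashComul σ).rTensor (C × C) ∘ₗ smashComul σ
      = (smashComul σ).lTensor (C × C) ∘ₗ smashComul σ :=
    LinearMap.prod_ext (hp.assoc_comp_rTensor_comp hδ 0) (hp.assoc_comp_rTensor_comp hδ 1)
  have counit_left : (TensorProduct.lid k (C × C)).toLinearMap
        ∘ₗ smashCounit.rTensor (C × C) ∘ₗ smashComul σ = LinearMap.id :=
    LinearMap.prod_ext (hp.lid_comp_rTensor_comp hδ hε 0) (hp.lid_comp_rTensor_comp hδ hε 1)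
  have counit_right : (TensorProduct.rid k (C × C)).toLinearMap
        ∘ₗ smashCounit.lTensor (C × C) ∘ₗ smashComul σ = LinearMap.id :=
    LinearMap.prod_ext (hp.rid_comp_lTensor_comp hδ hε 0) (hp.rid_comp_lTensor_comp hδ hε 1)
  exact ⟨LinearMap.congr_fun coassoc, LinearMap.congr_fun counit_left,
    LinearMap.congr_fun counit_right⟩

end SmashCoproduct
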